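/- Assume the discrete-time system is exponentially stable (|λ| < 1 for all λ in the spectrum of A). Let Y_N be a finite-dimensional subspace of Y with Y_N ⊆ ran P(1) and r = dim Y_N, let Q_N : Y → Y be a bounded projection with range Y_N, let G₂₀ : Y → ℂ^r be a bounded operator whose restriction to Y_N is a bijection onto ℂ^r, and set Z = ℂ^r, G₁ = I, G₂ = G₂₀ ∘ Q_N. Let K₀ : ℂ^r → U be a bounded operator such that the spectrum of the r×r matrix G₂ P(1) K₀ is contained in the open left half-plane {λ ∈ ℂ : Re λ < 0}, and set K = ε K₀. Then there exists ε* > 0 such that for every 0 < ε ≤ ε*: the closed-loop system is exponentially stable, and for every w ∈ U_d and y_ref ∈ Y (with the one-dimensional exosystem S = 1, E v = v·w, F v = −v·y_ref, v₀ = 1) and all initial states x₀ ∈ X, z₀ ∈ ℂ^r, the regulation error satisfies ‖e_n − (I − Q_N)(P(1) K z + P_d(1) w − y_ref)‖ → 0 as n → ∞, where z ∈ ℂ^r is the unique solution of Q_N(P(1) K z) = Q_N y_ref − Q_N(P_d(1) w). -/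

import Mathlib

noncomputable section

open ContinuousLinearMap

variable {X Z U Ud Y W : Type*}
  [NormedAddCommGroup X] [NormedSpace ℂ X]
  [NormedAddCommGroup Z] [NormedSpace ℂ Z]
  [NormedAddCommGroup U] [NormedSpace ℂ U]
  [NormedAddCommGroup Ud] [NormedSpace ℂ Ud]
  [NormedAddCommGroup Y] [NormedSpace ℂ Y]
  [NormedAddCommGroup W] [NormedSpace ℂ W]

/-- The closed-loop system operator `A_e` on `X × Z`:
`A_e(x,z) = (Ax + BKz, G₂Cx + G₁z + G₂DKz)`. -/
def Ae (A : X →L[ℂ] X) (B : U →L[ℂ] X) (C : X →L[ℂ] Y) (D : U →L[ℂ] Y)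
    (G₁ : Z →L[ℂ] Z) (G₂ : Y →L[ℂ] Z) (K : Z →L[ℂ] U) : (X × Z) →L[ℂ] (X × Z) :=
  ((A.comp (fst ℂ X Z)) + ((B.comp K).comp (snd ℂ X Z))).prod
    ((G₂.comp (C.comp (fst ℂ X Z))) + (G₁.comp (snd ℂ X Z))
      + ((G₂.comp (D.comp K)).comp (snd ℂ X Z)))

/-- The closed-loop input operator `B_e v = (B_d E v, G₂(D_d E v + F v))`. -/
def Be (Bd : Ud →L[ℂ] X) (Dd : Ud →L[ℂ] Y) (E : W →L[ℂ] Ud) (F : W →L[ℂ] Y)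
    (G₂ : Y →L[ℂ] Z) : W →L[ℂ] (X × Z) :=
  (Bd.comp E).prod (G₂.comp ((Dd.comp E) + F))

/-- The closed-loop output operator `C_e(x,z) = Cx + DKz`. -/
def Ce (C : X →L[ℂ] Y) (D : U →L[ℂ] Y) (K : Z →L[ℂ] U) : (X × Z) →L[ℂ] Y :=
  C.comp (fst ℂ X Z) + (D.comp K).comp (snd ℂ X Z)

/-- The closed-loop feedthrough operator `D_e = D_d E + F`. -/
def De (Dd : Ud →L[ℂ] Y) (E : W →L[ℂ] Ud) (F : W →L[ℂ] Y) : W →L[ℂ] Y :=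
  (Dd.comp E) + F

/-- The controller `(G₁, G₂, K)` solves the output regulation problem: the closed-loop
system is exponentially stable and the regulation error decays at a uniform exponential
rate for all initial states of the system, the controller and the exosystem. -/
def SolvesORP (A : X →L[ℂ] X) (B : U →L[ℂ] X) (Bd : Ud →L[ℂ] X)
    (C : X →L[ℂ] Y) (D : U →L[ℂ] Y) (Dd : Ud →L[ℂ] Y)
    (S : W →L[ℂ] W) (E : W →L[ℂ] Ud) (F : W →L[ℂ] Y)
    (G₁ : Z →L[ℂ] Z) (G₂ : Y →L[ℂ] Z) (K : Z →L[ℂ] U) : Prop :=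
  (∀ lam ∈ spectrum ℂ (Ae A B C D G₁ G₂ K), ‖lam‖ < 1) ∧
  ∃ M α : ℝ, 0 < M ∧ 0 < α ∧
    ∀ (x₀ : X) (z₀ : Z) (v₀ : W) (v : ℕ → W) (xe : ℕ → X × Z),
      v 0 = v₀ → (∀ n, v (n + 1) = S (v n)) →
      xe 0 = (x₀, z₀) →
      (∀ n, xe (n + 1) = Ae A B C D G₁ G₂ K (xe n) + Be Bd Dd E F G₂ (v n)) →
      ∀ n : ℕ, ‖Ce C D K (xe n) + De Dd E F (v n)‖
        ≤ M * Real.exp (-(α * n)) * (‖x₀‖ + ‖z₀‖ + ‖v₀‖)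

/-- The controller `(G₁, G₂, K)` solves the robust output regulation problem: it solves
the output regulation problem and retains exponential decay of the regulation error for
every perturbation of the operators `(A, B, B_d, C, D, D_d, E, F)` that preserves the
exponential stability of the closed-loop system. -/
def SolvesRORP (A : X →L[ℂ] X) (B : U →L[ℂ] X) (Bd : Ud →L[ℂ] X)
    (C : X →L[ℂ] Y) (D : U →L[ℂ] Y) (Dd : Ud →L[ℂ] Y)
    (S : W →L[ℂ] W) (E : W →L[ℂ] Ud) (F : W →L[ℂ] Y)
    (G₁ : Z →L[ℂ] Z) (G₂ : Y →L[ℂ] Z) (K : Z →L[ℂ] U) : Prop :=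
  SolvesORP A B Bd C D Dd S E F G₁ G₂ K ∧
  ∀ (A' : X →L[ℂ] X) (B' : U →L[ℂ] X) (Bd' : Ud →L[ℂ] X)
    (C' : X →L[ℂ] Y) (D' : U →L[ℂ] Y) (Dd' : Ud →L[ℂ] Y)
    (E' : W →L[ℂ] Ud) (F' : W →L[ℂ] Y),
    (∀ lam ∈ spectrum ℂ (Ae A' B' C' D' G₁ G₂ K), ‖lam‖ < 1) →
    ∃ M α : ℝ, 0 < M ∧ 0 < α ∧
      ∀ (x₀ : X) (z₀ : Z) (v₀ : W) (v : ℕ → W) (xe : ℕ → X × Z),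
        v 0 = v₀ → (∀ n, v (n + 1) = S (v n)) →
        xe 0 = (x₀, z₀) →
        (∀ n, xe (n + 1) = Ae A' B' C' D' G₁ G₂ K (xe n) + Be Bd' Dd' E' F' G₂ (v n)) →
        ∀ n : ℕ, ‖Ce C' D' K (xe n) + De Dd' E' F' (v n)‖
          ≤ M * Real.exp (-(α * n)) * (‖x₀‖ + ‖z₀‖ + ‖v₀‖)

/-- The transfer function `P(1) = C(I−A)⁻¹B + D` of the system at `μ = 1`. -/
def P1 (A : X →L[ℂ] X) (B : U →L[ℂ] X) (C : X →L[ℂ] Y) (D : U →L[ℂ] Y) : U →L[ℂ] Y :=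
  C.comp ((Ring.inverse ((1 : X →L[ℂ] X) - A)).comp B) + D

/-- The disturbance transfer function `P_d(1) = C(I−A)⁻¹B_d + D_d` at `μ = 1`. -/
def Pd1 (A : X →L[ℂ] X) (Bd : Ud →L[ℂ] X) (C : X →L[ℂ] Y) (Dd : Ud →L[ℂ] Y) :
    Ud →L[ℂ] Y :=
  C.comp ((Ring.inverse ((1 : X →L[ℂ] X) - A)).comp Bd) + Dd

/-!
For `‖μ‖ ≥ 1` the operator `μ - A` is invertible, so `μ - A_e` is invertible as soon as its
Schur complement `(μ - 1) - ε G₂ P(μ) K₀` is. Far from `μ = 1` this holds because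
`ε G₂ P(μ) K₀` is small compared with `μ - 1`. Near `μ = 1` the complement is `ε` times
`ν - G₂ P(μ) K₀` with `ν = (μ - 1) / ε`; since `‖μ‖ ≥ 1` forces `Re ν ≥ -ε ‖ν‖² / 2`, the point
`ν` stays in a half-plane where the resolvent of `G₂ P(1) K₀` is bounded, and `P(μ)` is close
to `P(1)`. Once `A_e` is stable, the state converges to the fixed point of the closed loop;
the integrator `G₁ = I` forces `G₂ e∞ = 0`, hence `Q_N e∞ = 0`, and the steady-state equations
identify `e∞` with `P(1) K z + P_d(1) w - y_ref` for the unique solution `z`.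
-/

open Filter Topology

section BanachAlgebra

variable {𝔸 : Type*} [NormedRing 𝔸] [NormedAlgebra ℂ 𝔸]

theorem mem_resolventSet_of_one_le_norm {a : 𝔸} (ha : ∀ μ ∈ spectrum ℂ a, ‖μ‖ < 1)
    {μ : ℂ} (hμ : 1 ≤ ‖μ‖) : μ ∈ resolventSet ℂ a :=
  not_not.1 fun hσ => (ha μ hσ).not_ge hμ

variable [CompleteSpace 𝔸]

theorem tendsto_norm_pow_of_spectrum_subset_ball {a : 𝔸} (h : ∀ μ ∈ spectrum ℂ a, ‖μ‖ < 1) :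
    Tendsto (fun n : ℕ => ‖a ^ n‖) atTop (𝓝 0) := by
  nontriviality 𝔸
  have hρ : spectralRadius ℂ a < 1 :=
    spectrum.spectralRadius_lt_of_forall_lt a fun μ hμ => by exact_mod_cast h μ hμ
  obtain ⟨t, hρt, ht1⟩ := ENNReal.lt_iff_exists_nnreal_btwn.1 hρ
  have hroot : ∀ᶠ n : ℕ in atTop, (‖a ^ n‖₊ : ENNReal) ^ (1 / n : ℝ) < t :=
    (spectrum.pow_nnnorm_pow_one_div_tendsto_nhds_spectralRadius a).eventually_lt_const hρt
  have hgeom : ∀ᶠ n : ℕ in atTop, ‖a ^ n‖ ≤ (t : ℝ) ^ n := by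
    filter_upwards [hroot, eventually_ne_atTop 0] with n hn hn0
    have hpow := ENNReal.rpow_lt_rpow hn (by positivity : (0 : ℝ) < n)
    rw [← ENNReal.rpow_mul, one_div_mul_cancel (by exact_mod_cast hn0), ENNReal.rpow_one,
      ENNReal.rpow_natCast] at hpow
    exact_mod_cast hpow.le
  exact squeeze_zero' (Eventually.of_forall fun n => norm_nonneg _) hgeom
    (tendsto_pow_atTop_nhds_zero_of_lt_one t.2 (by exact_mod_cast ht1))

theorem exists_norm_resolvent_le_of_isClosed {a : 𝔸} {F : Set ℂ} (hF : IsClosed F)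
    (hFa : F ⊆ resolventSet ℂ a) : ∃ m, 0 < m ∧ ∀ z ∈ F, ‖resolvent a z‖ ≤ m := by
  obtain ⟨R, hR⟩ : ∃ R, ∀ z : ℂ, R < ‖z‖ → ‖resolvent a z‖ ≤ 1 := by
    have hfar := (spectrum.resolvent_tendsto_cobounded (𝕜 := ℂ) a).eventually
      (Metric.closedBall_mem_nhds (0 : 𝔸) one_pos)
    rw [atTop_basis_Ioi.cobounded_of_norm.eventually_iff] at hfar
    simpa using hfar
  have hcpt : IsCompact (F ∩ Metric.closedBall 0 R) := (isCompact_closedBall 0 R).inter_left hF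
  have hcont : ContinuousOn (resolvent a) (F ∩ Metric.closedBall 0 R) := fun z hz =>
    (spectrum.hasDerivAt_resolvent_const_left (hFa hz.1)).continuousAt.continuousWithinAt
  obtain ⟨m, hm⟩ := hcpt.exists_bound_of_continuousOn hcont
  refine ⟨max m 1, by positivity, fun z hz => ?_⟩
  by_cases hzR : ‖z‖ ≤ R
  · exact (hm z ⟨hz, by simpa using hzR⟩).trans (le_max_left _ _)
  · exact (hR z (not_le.1 hzR)).trans (le_max_right _ _)

theorem mem_resolventSet_of_norm_sub_mul_lt {a b : 𝔸} {μ : ℂ} (hμ : μ ∈ resolventSet ℂ a)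
    (h : ‖b - a‖ * ‖resolvent a μ‖ < 1) : μ ∈ resolventSet ℂ b := by
  nontriviality 𝔸
  have hR : 0 < ‖resolvent a μ‖ := norm_pos_iff.2 (spectrum.isUnit_resolvent.1 hμ).ne_zero
  have hu : IsUnit (algebraMap ℂ 𝔸 μ - a) := hμ
  have hnear : ‖(algebraMap ℂ 𝔸 μ - b) - hu.unit‖ < ‖(↑hu.unit⁻¹ : 𝔸)‖⁻¹ := by
    rw [IsUnit.unit_spec, ← spectrum.resolvent_eq hμ, sub_sub_sub_cancel_left, norm_sub_rev,
      ← one_div, lt_div_iff₀ hR]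
    exact h
  exact (hu.unit.ofNearby _ hnear).isUnit

theorem exists_pos_forall_neg_le_re_mem_resolventSet {a : 𝔸}
    (h : ∀ ν ∈ spectrum ℂ a, ν.re < 0) :
    ∃ δ, 0 < δ ∧ ∀ ν : ℂ, -δ ≤ ν.re → ν ∈ resolventSet ℂ a := by
  rcases (spectrum ℂ a).eq_empty_or_nonempty with hempty | hne
  · exact ⟨1, one_pos, fun ν _ => not_not.1 fun hνσ => hempty.subset hνσ⟩
  obtain ⟨ν₀, hν₀, hmax⟩ := (spectrum.isCompact a).exists_isMaxOn hne
    Complex.continuous_re.continuousOn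
  refine ⟨-ν₀.re / 2, by linarith [h ν₀ hν₀], fun ν hν => not_not.1 fun hνσ => ?_⟩
  linarith [h ν₀ hν₀, show ν.re ≤ ν₀.re from hmax hνσ]

theorem neg_sq_norm_sub_one_le_two_mul_re {μ : ℂ} (hμ : 1 ≤ ‖μ‖) :
    -‖μ - 1‖ ^ 2 ≤ 2 * (μ - 1).re := by
  have h : 1 ≤ ‖μ‖ ^ 2 := by nlinarith
  rw [Complex.sq_norm, Complex.normSq_apply] at h ⊢
  simp only [Complex.sub_re, Complex.one_re, Complex.sub_im, Complex.one_im] at h ⊢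
  nlinarith

theorem exists_lowGain_isUnit {M : ℂ → 𝔸} {m : ℝ} (hM : ∀ μ : ℂ, 1 ≤ ‖μ‖ → ‖M μ‖ ≤ m)
    (hM1 : ContinuousAt M 1) (hspec : ∀ ν ∈ spectrum ℂ (M 1), ν.re < 0) :
    ∃ εstar : ℝ, 0 < εstar ∧ ∀ ε : ℝ, 0 < ε → ε ≤ εstar →
      ∀ μ : ℂ, 1 ≤ ‖μ‖ → IsUnit (algebraMap ℂ 𝔸 (μ - 1) - (ε : ℂ) • M μ) := by
  obtain ⟨δ, hδ, hδρ⟩ := exists_pos_forall_neg_le_re_mem_resolventSet hspec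
  obtain ⟨m₁, hm₁, hRm₁⟩ := exists_norm_resolvent_le_of_isClosed
    (isClosed_le continuous_const Complex.continuous_re) (fun ν hν => hδρ ν hν)
  obtain ⟨η, hη, hMη⟩ := Metric.continuousAt_iff.1 hM1 (1 / m₁) (by positivity)
  have hm : 0 ≤ m := (norm_nonneg _).trans (hM 1 (by simp))
  set c := m * ‖(1 : 𝔸)‖ + 1
  have hc : 0 < c := by positivity
  refine ⟨min (2 * δ / c ^ 2) (η / c), by positivity, fun ε hε hεle μ hμ => ?_⟩
  have hεδ : c ^ 2 * ε ≤ 2 * δ := by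
    have := hεle.trans (min_le_left _ _)
    rwa [le_div_iff₀ (by positivity), mul_comm] at this
  have hεη : c * ε ≤ η := by
    have := hεle.trans (min_le_right _ _)
    rwa [le_div_iff₀ hc, mul_comm] at this
  by_cases hnear : ‖μ - 1‖ < c * ε
  · set ν : ℂ := (μ - 1) / (ε : ℂ)
    have hν : -δ ≤ ν.re := by
      have hre := neg_sq_norm_sub_one_le_two_mul_re hμ
      have hsq : ‖μ - 1‖ ^ 2 ≤ (c * ε) ^ 2 := pow_le_pow_left₀ (norm_nonneg _) hnear.le 2
      rw [Complex.div_ofReal_re, le_div_iff₀ hε]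
      nlinarith
    have hMν : ν ∈ resolventSet ℂ (M μ) := by
      refine mem_resolventSet_of_norm_sub_mul_lt (hδρ ν hν) ?_
      have hdist : ‖M μ - M 1‖ < 1 / m₁ := by
        simpa [dist_eq_norm] using hMη (show dist μ 1 < η by rw [dist_eq_norm]; linarith)
      calc ‖M μ - M 1‖ * ‖resolvent (M 1) ν‖ ≤ ‖M μ - M 1‖ * m₁ := by
            gcongr; exact hRm₁ ν hν
        _ < 1 / m₁ * m₁ := by gcongr
        _ = 1 := by field_simp
    have hεne : (ε : ℂ) ≠ 0 := by exact_mod_cast hε.ne'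
    have hscale : algebraMap ℂ 𝔸 (μ - 1) - (ε : ℂ) • M μ
        = Units.mk0 (ε : ℂ) hεne • (algebraMap ℂ 𝔸 ν - M μ) := by
      rw [Units.smul_def, Units.val_mk0, smul_sub, Algebra.smul_def (ε : ℂ) (algebraMap ℂ 𝔸 ν),
        ← map_mul, mul_div_cancel₀ _ hεne]
    rw [hscale]
    exact hMν.smul _
  · refine spectrum.mem_resolventSet_iff.1 (spectrum.mem_resolventSet_of_norm_lt_mul ?_)
    calc ‖(ε : ℂ) • M μ‖ * ‖(1 : 𝔸)‖ ≤ ε * m * ‖(1 : 𝔸)‖ := by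
          rw [norm_smul, Complex.norm_of_nonneg hε.le]
          gcongr
          exact hM μ hμ
      _ < c * ε := by nlinarith
      _ ≤ ‖μ - 1‖ := not_lt.1 hnear

end BanachAlgebra

theorem isUnit_prod_coprod {a : X →L[ℂ] X} {b : Z →L[ℂ] X} {c : X →L[ℂ] Z} {d : Z →L[ℂ] Z}
    (ha : IsUnit a) (hs : IsUnit (d - c ∘L Ring.inverse a ∘L b)) :
    IsUnit ((a.coprod b).prod (c.coprod d)) := by
  set α := Ring.inverse a
  set σ := Ring.inverse (d - c ∘L α ∘L b)
  have haα : ∀ x, a (α x) = x := fun x => by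
    simpa using congr($(Ring.mul_inverse_cancel a ha) x)
  have hαa : ∀ x, α (a x) = x := fun x => by
    simpa using congr($(Ring.inverse_mul_cancel a ha) x)
  have hdσ : ∀ z, d (σ z) = z + c (α (b (σ z))) := fun z => by
    have := congr($(Ring.mul_inverse_cancel _ hs) z)
    simp only [mul_apply_eq_comp, sub_apply, comp_apply, one_apply_eq_self] at this
    linear_combination (norm := module) this
  have hσd : ∀ z, σ (d z) = z + σ (c (α (b z))) := fun z => by
    have := congr($(Ring.inverse_mul_cancel _ hs) z)
    simp only [mul_apply_eq_comp, sub_apply, comp_apply, one_apply_eq_self, map_sub] at this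
    linear_combination (norm := module) this
  refine isUnit_iff_exists.2 ⟨((α + α ∘L b ∘L σ ∘L c ∘L α).coprod (-(α ∘L b ∘L σ))).prod
    ((-(σ ∘L c ∘L α)).coprod σ), ?_, ?_⟩ <;>
  ext <;>
  simp only [mul_apply_eq_comp, prod_apply, coprod_apply, comp_apply, add_apply, neg_apply,
    one_apply_eq_self, inl_apply, inr_apply, map_add, map_neg, map_zero, add_zero, zero_add,
    haα, hαa, hdσ, hσd] <;>
  abel

def transferFn (A : X →L[ℂ] X) (B : U →L[ℂ] X) (C : X →L[ℂ] Y) (D : U →L[ℂ] Y) (μ : ℂ) :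
    U →L[ℂ] Y :=
  C ∘L resolvent A μ ∘L B + D

theorem transferFn_one (A : X →L[ℂ] X) (B : U →L[ℂ] X) (C : X →L[ℂ] Y) (D : U →L[ℂ] Y) :
    transferFn A B C D 1 = P1 A B C D := by
  simp [transferFn, P1, resolvent]

theorem norm_transferFn_le (A : X →L[ℂ] X) (B : U →L[ℂ] X) (C : X →L[ℂ] Y) (D : U →L[ℂ] Y)
    (μ : ℂ) : ‖transferFn A B C D μ‖ ≤ ‖C‖ * ‖resolvent A μ‖ * ‖B‖ + ‖D‖ := by
  grw [transferFn, norm_add_le, opNorm_comp_le, opNorm_comp_le, mul_assoc]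

theorem continuousAt_transferFn [CompleteSpace X] {A : X →L[ℂ] X} (B : U →L[ℂ] X)
    (C : X →L[ℂ] Y) (D : U →L[ℂ] Y) {μ : ℂ} (hμ : μ ∈ resolventSet ℂ A) :
    ContinuousAt (transferFn A B C D) μ :=
  (continuousAt_const.clm_comp
    ((spectrum.hasDerivAt_resolvent_const_left hμ).continuousAt.clm_comp continuousAt_const)).add
    continuousAt_const

theorem mem_resolventSet_Ae {A : X →L[ℂ] X} {B : U →L[ℂ] X} {C : X →L[ℂ] Y} {D : U →L[ℂ] Y}
    {G₁ : Z →L[ℂ] Z} {G₂ : Y →L[ℂ] Z} {K : Z →L[ℂ] U} {μ : ℂ} (hA : μ ∈ resolventSet ℂ A)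
    (hschur : IsUnit (algebraMap ℂ (Z →L[ℂ] Z) μ - G₁ - G₂ ∘L transferFn A B C D μ ∘L K)) :
    μ ∈ resolventSet ℂ (Ae A B C D G₁ G₂ K) := by
  have hblock : algebraMap ℂ _ μ - Ae A B C D G₁ G₂ K
      = ((algebraMap ℂ _ μ - A).coprod (-(B ∘L K))).prod
          ((-(G₂ ∘L C)).coprod (algebraMap ℂ _ μ - G₁ - G₂ ∘L D ∘L K)) := by
    ext <;> simp [Ae, Algebra.algebraMap_eq_smul_one, sub_add_eq_sub_sub]
  rw [spectrum.mem_resolventSet_iff, hblock]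
  refine isUnit_prod_coprod hA ?_
  convert hschur using 1
  ext z
  simp only [transferFn, resolvent, comp_neg, neg_comp, neg_neg, add_comp, comp_add, sub_apply,
    add_apply, comp_apply]
  abel

theorem exists_lowGain_Ae_stable [CompleteSpace X] [CompleteSpace Z] {A : X →L[ℂ] X}
    (B : U →L[ℂ] X) (C : X →L[ℂ] Y) (D : U →L[ℂ] Y) (G₂ : Y →L[ℂ] Z) (K₀ : Z →L[ℂ] U)
    (hA : ∀ μ ∈ spectrum ℂ A, ‖μ‖ < 1)
    (hspec : ∀ ν ∈ spectrum ℂ (G₂ ∘L P1 A B C D ∘L K₀), ν.re < 0) :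
    ∃ εstar : ℝ, 0 < εstar ∧ ∀ ε : ℝ, 0 < ε → ε ≤ εstar →
      ∀ μ ∈ spectrum ℂ (Ae A B C D 1 G₂ ((ε : ℂ) • K₀)), ‖μ‖ < 1 := by
  obtain ⟨m, -, hm⟩ := exists_norm_resolvent_le_of_isClosed
    (isClosed_le continuous_const continuous_norm) fun μ hμ => mem_resolventSet_of_one_le_norm hA hμ
  set M : ℂ → Z →L[ℂ] Z := fun μ => G₂ ∘L transferFn A B C D μ ∘L K₀
  have hMbound : ∀ μ : ℂ, 1 ≤ ‖μ‖ → ‖M μ‖ ≤ ‖G₂‖ * (‖C‖ * m * ‖B‖ + ‖D‖) * ‖K₀‖ := fun μ hμ => by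
    grw [opNorm_comp_le, opNorm_comp_le, norm_transferFn_le, hm μ hμ, ← mul_assoc]
  have hMcont : ContinuousAt M 1 :=
    continuousAt_const.clm_comp ((continuousAt_transferFn B C D
      (mem_resolventSet_of_one_le_norm hA norm_one.ge)).clm_comp continuousAt_const)
  have hM1 : M 1 = G₂ ∘L P1 A B C D ∘L K₀ := by simp only [M, transferFn_one]
  obtain ⟨εstar, hεstar, hlow⟩ := exists_lowGain_isUnit hMbound hMcont (hM1 ▸ hspec)
  refine ⟨εstar, hεstar, fun ε hε hεle μ hμσ => not_le.1 fun hμ => hμσ ?_⟩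
  refine mem_resolventSet_Ae (mem_resolventSet_of_one_le_norm hA hμ) ?_
  convert hlow ε hε hεle μ hμ using 1
  simp only [M, map_sub, map_one, comp_smul, sub_sub]

theorem exists_fixedPoint_tendsto_of_spectrum_subset_ball {E : Type*} [NormedAddCommGroup E]
    [NormedSpace ℂ E] [CompleteSpace E] {T : E →L[ℂ] E} (hT : ∀ μ ∈ spectrum ℂ T, ‖μ‖ < 1)
    {b : E} {x : ℕ → E} (hx : ∀ n, x (n + 1) = T (x n) + b) :
    ∃ xbar, T xbar + b = xbar ∧ Tendsto x atTop (𝓝 xbar) := by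
  have hunit : IsUnit (1 - T) := by
    simpa using spectrum.mem_resolventSet_iff.1 (mem_resolventSet_of_one_le_norm hT norm_one.ge)
  set xbar := Ring.inverse (1 - T) b
  have hfix : T xbar + b = xbar := by
    have h := congr($(Ring.mul_inverse_cancel _ hunit) b)
    simp only [mul_apply_eq_comp, sub_apply, one_apply_eq_self] at h
    rw [← h, add_sub_cancel]
  have hpow : ∀ n, x n - xbar = (T ^ n) (x 0 - xbar) := by
    intro n
    induction n with
    | zero => simp
    | succ n ih =>
      calc x (n + 1) - xbar = T (x n - xbar) := by
            conv_lhs => rw [hx, ← hfix]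
            rw [map_sub]; abel
        _ = (T ^ (n + 1)) (x 0 - xbar) := by rw [ih, pow_succ', mul_apply_eq_comp]
  refine ⟨xbar, hfix, tendsto_sub_nhds_zero_iff.1 (squeeze_zero_norm (fun n => ?_)
    (by simpa using (tendsto_norm_pow_of_spectrum_subset_ball hT).mul_const ‖x 0 - xbar‖))⟩
  rw [hpow n]
  exact (T ^ n).le_opNorm _

section SteadyState

variable {A : X →L[ℂ] X} {B : U →L[ℂ] X} {Bd : Ud →L[ℂ] X} {C : X →L[ℂ] Y} {D : U →L[ℂ] Y}
  {Dd : Ud →L[ℂ] Y} {G₂ : Y →L[ℂ] Z} {K : Z →L[ℂ] U} {E : W →L[ℂ] Ud} {F : W →L[ℂ] Y}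
  {v : W} {xbar : X × Z}

theorem map_Ce_add_De_eq_zero_of_fixedPoint
    (hfix : Ae A B C D 1 G₂ K xbar + Be Bd Dd E F G₂ v = xbar) :
    G₂ (Ce C D K xbar + De Dd E F v) = 0 := by
  have h := congr(Prod.snd $hfix)
  simp only [Ae, Be, Prod.snd_add, prod_apply, add_apply, comp_apply, coe_fst', coe_snd',
    one_apply_eq_self, map_add] at h
  simp only [Ce, De, add_apply, comp_apply, coe_fst', coe_snd', map_add]
  linear_combination (norm := module) h

theorem Ce_add_De_eq_of_fixedPoint (hA : 1 ∈ resolventSet ℂ A)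
    (hfix : Ae A B C D 1 G₂ K xbar + Be Bd Dd E F G₂ v = xbar) :
    Ce C D K xbar + De Dd E F v = P1 A B C D (K xbar.2) + Pd1 A Bd C Dd (E v) + F v := by
  have h := congr(Prod.fst $hfix)
  simp only [Ae, Be, Prod.fst_add, prod_apply, add_apply, comp_apply, coe_fst', coe_snd'] at h
  have hx : xbar.1 = Ring.inverse (1 - A) (B (K xbar.2) + Bd (E v)) := by
    have hunit : IsUnit (1 - A) := by simpa using spectrum.mem_resolventSet_iff.1 hA
    calc xbar.1 = Ring.inverse (1 - A) ((1 - A) xbar.1) := by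
          rw [← mul_apply_eq_comp, Ring.inverse_mul_cancel _ hunit, one_apply_eq_self]
      _ = Ring.inverse (1 - A) (B (K xbar.2) + Bd (E v)) := by
          congr 1
          rw [sub_apply, one_apply_eq_self]
          linear_combination (norm := module) -h
  simp only [Ce, De, P1, Pd1, add_apply, comp_apply, coe_fst', coe_snd', hx, map_add]
  abel

end SteadyState

theorem existsUnique_apply_eq_of_isUnit {G : Y →L[ℂ] Z} {Q : Y →L[ℂ] Y} {L : Z →L[ℂ] Y}
    {V : Submodule ℂ Y} (hG : Set.InjOn G V) (hQ : ∀ y, Q y ∈ V) (hL : IsUnit ((G ∘L Q) ∘L L))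
    {y : Y} (hy : y ∈ V) : ∃! z, Q (L z) = y := by
  obtain ⟨u, hu⟩ := hL
  refine ⟨(↑u⁻¹ : Z →L[ℂ] Z) (G y), hG (hQ _) hy ?_, fun z hz => ?_⟩
  · change ((G ∘L Q) ∘L L) _ = G y
    rw [← hu, ← mul_apply_eq_comp, Units.mul_inv, one_apply_eq_self]
  · rw [← hz]
    change z = (↑u⁻¹ : Z →L[ℂ] Z) (((G ∘L Q) ∘L L) z)
    rw [← hu, ← mul_apply_eq_comp, Units.inv_mul, one_apply_eq_self]

theorem tendsto_regulation_error [CompleteSpace X] [CompleteSpace Z] {A : X →L[ℂ] X}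
    {B : U →L[ℂ] X} {Bd : Ud →L[ℂ] X} {C : X →L[ℂ] Y} {D : U →L[ℂ] Y} {Dd : Ud →L[ℂ] Y}
    {G : Y →L[ℂ] Z} {Q : Y →L[ℂ] Y} {V : Submodule ℂ Y} {K : Z →L[ℂ] U}
    (hA : 1 ∈ resolventSet ℂ A) (hstable : ∀ μ ∈ spectrum ℂ (Ae A B C D 1 (G ∘L Q) K), ‖μ‖ < 1)
    (hG : Set.InjOn G V) (hQ : ∀ y, Q y ∈ V) {w : Ud} {yref : Y} {z : Z}
    (huniq : ∀ z', Q (P1 A B C D (K z')) = Q yref - Q (Pd1 A Bd C Dd w) → z' = z)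
    {xe : ℕ → X × Z}
    (hxe : ∀ n, xe (n + 1) = Ae A B C D 1 (G ∘L Q) K (xe n)
      + Be Bd Dd (toSpanSingleton ℂ w) (-(toSpanSingleton ℂ yref)) (G ∘L Q) 1) :
    Tendsto (fun n => ‖Ce C D K (xe n) + De Dd (toSpanSingleton ℂ w) (-(toSpanSingleton ℂ yref)) 1
      - ((P1 A B C D (K z) + Pd1 A Bd C Dd w - yref)
        - Q (P1 A B C D (K z) + Pd1 A Bd C Dd w - yref))‖) atTop (𝓝 0) := by
  obtain ⟨xbar, hfix, hlim⟩ := exists_fixedPoint_tendsto_of_spectrum_subset_ball hstable hxe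
  set e := Ce C D K xbar + De Dd (toSpanSingleton ℂ w) (-(toSpanSingleton ℂ yref)) 1
  have hQe : Q e = 0 :=
    hG (hQ e) V.zero_mem ((map_Ce_add_De_eq_zero_of_fixedPoint hfix).trans G.map_zero.symm)
  have he : e = P1 A B C D (K xbar.2) + Pd1 A Bd C Dd w - yref := by
    simpa [sub_eq_add_neg] using Ce_add_De_eq_of_fixedPoint hA hfix
  have hz : xbar.2 = z := huniq _ <| by
    rw [he, map_sub, map_add] at hQe
    linear_combination (norm := module) hQe
  rw [← hz, ← he, hQe, sub_zero]
  exact tendsto_iff_norm_sub_tendsto_zero.1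
    ((((Ce C D K).continuous.tendsto xbar).comp hlim).add_const _)

theorem approximate_rorp_low_gain_controller_general
    {X U Ud Y : Type*}
    [NormedAddCommGroup X] [NormedSpace ℂ X] [CompleteSpace X]
    [NormedAddCommGroup U] [InnerProductSpace ℂ U]
    [NormedAddCommGroup Ud] [InnerProductSpace ℂ Ud]
    [NormedAddCommGroup Y] [InnerProductSpace ℂ Y]
    (A : X →L[ℂ] X) (B : U →L[ℂ] X) (Bd : Ud →L[ℂ] X)
    (C : X →L[ℂ] Y) (D : U →L[ℂ] Y) (Dd : Ud →L[ℂ] Y)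
    (hstab : ∀ lam ∈ spectrum ℂ A, ‖lam‖ < 1)
    (YN : Submodule ℂ Y)
    (r : ℕ)
    (QN : Y →L[ℂ] Y) (hranQN : LinearMap.range (QN : Y →ₗ[ℂ] Y) = YN)
    (G₂₀ : Y →L[ℂ] EuclideanSpace ℂ (Fin r))
    (hbij : Function.Bijective fun y : YN => G₂₀ (y : Y))
    (K₀ : EuclideanSpace ℂ (Fin r) →L[ℂ] U)
    (hspec : ∀ lam ∈ spectrum ℂ ((G₂₀.comp QN).comp ((P1 A B C D).comp K₀)),
      lam.re < 0) :
    ∃ εstar : ℝ, 0 < εstar ∧ ∀ ε : ℝ, 0 < ε → ε ≤ εstar →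
      (∀ lam ∈ spectrum ℂ
          (Ae A B C D (1 : EuclideanSpace ℂ (Fin r) →L[ℂ] EuclideanSpace ℂ (Fin r))
            (G₂₀.comp QN) ((ε : ℂ) • K₀)), ‖lam‖ < 1) ∧
      ∀ (w : Ud) (yref : Y) (x₀ : X) (z₀ : EuclideanSpace ℂ (Fin r)),
        (∃! z : EuclideanSpace ℂ (Fin r),
            QN (P1 A B C D (((ε : ℂ) • K₀) z)) = QN yref - QN (Pd1 A Bd C Dd w))
        ∧ ∀ z : EuclideanSpace ℂ (Fin r),
            QN (P1 A B C D (((ε : ℂ) • K₀) z)) = QN yref - QN (Pd1 A Bd C Dd w) →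
            ∀ xe : ℕ → X × EuclideanSpace ℂ (Fin r),
              xe 0 = (x₀, z₀) →
              (∀ n, xe (n + 1)
                  = Ae A B C D
                      (1 : EuclideanSpace ℂ (Fin r) →L[ℂ] EuclideanSpace ℂ (Fin r))
                      (G₂₀.comp QN) ((ε : ℂ) • K₀) (xe n)
                    + Be Bd Dd (ContinuousLinearMap.toSpanSingleton ℂ w)
                        (-(ContinuousLinearMap.toSpanSingleton ℂ yref))
                        (G₂₀.comp QN) (1 : ℂ)) →
              Filter.Tendsto
                (fun n => ‖Ce C D ((ε : ℂ) • K₀) (xe n)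
                    + De Dd (ContinuousLinearMap.toSpanSingleton ℂ w)
                        (-(ContinuousLinearMap.toSpanSingleton ℂ yref)) (1 : ℂ)
                    - ((P1 A B C D (((ε : ℂ) • K₀) z) + Pd1 A Bd C Dd w - yref)
                        - QN (P1 A B C D (((ε : ℂ) • K₀) z)
                            + Pd1 A Bd C Dd w - yref))‖)
                Filter.atTop (nhds 0) := by
  obtain ⟨εstar, hεstar, hstable⟩ := exists_lowGain_Ae_stable B C D (G₂₀ ∘L QN) K₀ hstab hspec
  have hinj : Set.InjOn G₂₀ YN := Set.injOn_iff_injective.2 hbij.1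
  have hQ : ∀ y, QN y ∈ YN := fun y => hranQN ▸ LinearMap.mem_range_self (QN : Y →ₗ[ℂ] Y) y
  have hT : IsUnit ((G₂₀ ∘L QN) ∘L P1 A B C D ∘L K₀) :=
    not_not.1 fun h => (hspec 0 ((spectrum.zero_mem_iff ℂ).2 h)).false
  refine ⟨εstar, hεstar, fun ε hε hεle => ⟨hstable ε hε hεle, fun w yref _ _ => ?_⟩⟩
  have hTε : IsUnit ((G₂₀ ∘L QN) ∘L P1 A B C D ∘L ((ε : ℂ) • K₀)) := by
    rw [comp_smul, comp_smul]
    exact hT.smul (Units.mk0 (ε : ℂ) (by exact_mod_cast hε.ne'))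
  have hsol := existsUnique_apply_eq_of_isUnit hinj hQ hTε
    (YN.sub_mem (hQ yref) (hQ (Pd1 A Bd C Dd w)))
  exact ⟨hsol, fun z hz xe _ hxe => tendsto_regulation_error
    (mem_resolventSet_of_one_le_norm hstab norm_one.ge) (hstable ε hε hεle) hinj hQ
    (fun z' hz' => hsol.unique hz' hz) hxe⟩

/-- the finite-dimensional low-gain controller `(I, G₂₀Q_N, εK₀)` achieves,
for all sufficiently small `ε > 0`, exponential closed-loop stability and approximate
output regulation: the regulation error converges to
`(I − Q_N)(P(1)Kz + P_d(1)w − y_ref)` where `z` is the unique solution of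
`Q_N P(1)Kz = Q_N y_ref − Q_N P_d(1)w`. -/
theorem approximate_rorp_low_gain_controller
    {X U Ud Y : Type*}
    [NormedAddCommGroup X] [NormedSpace ℂ X] [CompleteSpace X]
    [NormedAddCommGroup U] [InnerProductSpace ℂ U] [CompleteSpace U]
    [NormedAddCommGroup Ud] [InnerProductSpace ℂ Ud] [CompleteSpace Ud]
    [NormedAddCommGroup Y] [InnerProductSpace ℂ Y] [CompleteSpace Y]
    (A : X →L[ℂ] X) (B : U →L[ℂ] X) (Bd : Ud →L[ℂ] X)
    (C : X →L[ℂ] Y) (D : U →L[ℂ] Y) (Dd : Ud →L[ℂ] Y)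
    (hstab : ∀ lam ∈ spectrum ℂ A, ‖lam‖ < 1)
    (YN : Submodule ℂ Y) [FiniteDimensional ℂ YN]
    (hYNran : (YN : Set Y) ⊆ Set.range ⇑(P1 A B C D))
    (r : ℕ) (hrank : Module.finrank ℂ YN = r)
    (QN : Y →L[ℂ] Y) (hproj : QN.comp QN = QN) (hranQN : LinearMap.range (QN : Y →ₗ[ℂ] Y) = YN)
    (G₂₀ : Y →L[ℂ] EuclideanSpace ℂ (Fin r))
    (hbij : Function.Bijective fun y : YN => G₂₀ (y : Y))
    (K₀ : EuclideanSpace ℂ (Fin r) →L[ℂ] U)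
    (hspec : ∀ lam ∈ spectrum ℂ ((G₂₀.comp QN).comp ((P1 A B C D).comp K₀)),
      lam.re < 0) :
    ∃ εstar : ℝ, 0 < εstar ∧ ∀ ε : ℝ, 0 < ε → ε ≤ εstar →
      (∀ lam ∈ spectrum ℂ
          (Ae A B C D (1 : EuclideanSpace ℂ (Fin r) →L[ℂ] EuclideanSpace ℂ (Fin r))
            (G₂₀.comp QN) ((ε : ℂ) • K₀)), ‖lam‖ < 1) ∧
      ∀ (w : Ud) (yref : Y) (x₀ : X) (z₀ : EuclideanSpace ℂ (Fin r)),
        (∃! z : EuclideanSpace ℂ (Fin r),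
            QN (P1 A B C D (((ε : ℂ) • K₀) z)) = QN yref - QN (Pd1 A Bd C Dd w))
        ∧ ∀ z : EuclideanSpace ℂ (Fin r),
            QN (P1 A B C D (((ε : ℂ) • K₀) z)) = QN yref - QN (Pd1 A Bd C Dd w) →
            ∀ xe : ℕ → X × EuclideanSpace ℂ (Fin r),
              xe 0 = (x₀, z₀) →
              (∀ n, xe (n + 1)
                  = Ae A B C D
                      (1 : EuclideanSpace ℂ (Fin r) →L[ℂ] EuclideanSpace ℂ (Fin r))
                      (G₂₀.comp QN) ((ε : ℂ) • K₀) (xe n)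
                    + Be Bd Dd (ContinuousLinearMap.toSpanSingleton ℂ w)
                        (-(ContinuousLinearMap.toSpanSingleton ℂ yref))
                        (G₂₀.comp QN) (1 : ℂ)) →
              Filter.Tendsto
                (fun n => ‖Ce C D ((ε : ℂ) • K₀) (xe n)
                    + De Dd (ContinuousLinearMap.toSpanSingleton ℂ w)
                        (-(ContinuousLinearMap.toSpanSingleton ℂ yref)) (1 : ℂ)
                    - ((P1 A B C D (((ε : ℂ) • K₀) z) + Pd1 A Bd C Dd w - yref)
                        - QN (P1 A B C D (((ε : ℂ) • K₀) z)
                            + Pd1 A Bd C Dd w - yref))‖)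
                Filter.atTop (nhds 0) :=
  approximate_rorp_low_gain_controller_general A B Bd C D Dd hstab YN r QN hranQN G₂₀ hbij K₀ hspec
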